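/- arXiv:1410.1456 — 5 statements merged into one kernel-verified Lean document; each statement's English description precedes it below -/
import Mathlib

section
/- Let K = [-β₁, β₂] ⊂ ℝ with β₁, β₂ > 0, and let A ∈ ℝ^{n×n}, B ∈ ℝ^{n×m} with rank(A) = n and rank(B) = n. Then the linear span of the functions β ↦ β^k A^k b_j (for j = 1,…,m, k = 0,1,2,…, where b_j is the j-th column of B) is dense in C(K, ℝ^n) with the uniform norm. -/
/-!
By Weierstrass, each coordinate of `ξ` is uniformly close to a polynomial on `K`, so `ξ` is close
to `β ↦ ∑ₖ βᵏ cₖ` for finitely many vectors `cₖ ∈ ℝⁿ`. Since `A` is invertible, `Aᵏ B` has the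
same rank `n` as `B`, so its columns `Aᵏ bⱼ` span `ℝⁿ` and every `cₖ` is a combination of them.
-/

open Polynomial

namespace Matrix

variable {K : Type*} [Field K] {m n : Type*} [Fintype m] [Fintype n]

theorem range_mulVecLin_eq_top_of_rank_eq (M : Matrix m n K) (h : M.rank = Fintype.card m) :
    LinearMap.range M.mulVecLin = ⊤ :=
  Submodule.eq_top_of_finrank_eq (by rw [← rank, h, Module.finrank_fintype_fun_eq_card])

theorem isUnit_of_rank_eq [DecidableEq n] (A : Matrix n n K) (h : A.rank = Fintype.card n) :
    IsUnit A :=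
  mulVec_surjective_iff_isUnit.1 <| LinearMap.range_eq_top.1 <|
    range_mulVecLin_eq_top_of_rank_eq A h

theorem span_range_mulVec_col_eq_top [DecidableEq n] {A : Matrix n n K} {B : Matrix n m K}
    (hA : A.rank = Fintype.card n) (hB : B.rank = Fintype.card n) (k : ℕ) :
    Submodule.span K (Set.range fun j => (A ^ k) *ᵥ B.col j) = ⊤ := by
  have hAk : IsUnit (A ^ k).det := by
    rw [det_pow]
    exact ((isUnit_iff_isUnit_det A).1 (isUnit_of_rank_eq A hA)).pow k
  have hrank : (A ^ k * B).rank = Fintype.card n := by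
    rw [rank_mul_eq_right_of_isUnit_det _ _ hAk, hB]
  rw [← range_mulVecLin_eq_top_of_rank_eq _ hrank, range_mulVecLin]
  rfl

end Matrix

theorem Polynomial.eval_pi_eq_sum_range_smul_coeff {R ι : Type*} [CommSemiring R]
    (p : ι → R[X]) {N : ℕ} (hN : ∀ i, (p i).natDegree < N) (x : R) :
    (fun i => (p i).eval x) = ∑ k ∈ Finset.range N, x ^ k • fun i => (p i).coeff k := by
  ext i
  simp [eval_eq_sum_range' (hN i), mul_comm]

theorem exists_polynomial_pi_near_of_continuousOn {ι : Type*} [Fintype ι] (a b : ℝ)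
    (f : ℝ → ι → ℝ) (hf : ContinuousOn f (Set.Icc a b)) (ε : ℝ) (hε : 0 < ε) :
    ∃ p : ι → ℝ[X], ∀ x ∈ Set.Icc a b, ‖f x - fun i => (p i).eval x‖ < ε := by
  choose p hp using fun i => exists_polynomial_near_of_continuousOn a b (f · i)
    ((continuous_apply i).comp_continuousOn hf) ε hε
  refine ⟨p, fun x hx => (pi_norm_lt_iff hε).2 fun i => ?_⟩
  rw [Pi.sub_apply, Real.norm_eq_abs, abs_sub_comm]
  exact hp i x hx

theorem exists_sum_pow_smul_near_of_span_eq_top {ι κ : Type*} [Fintype ι] [Fintype κ]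
    (v : ℕ → κ → ι → ℝ) (hv : ∀ k, Submodule.span ℝ (Set.range (v k)) = ⊤) (a b : ℝ)
    (f : ℝ → ι → ℝ) (hf : ContinuousOn f (Set.Icc a b)) (ε : ℝ) (hε : 0 < ε) :
    ∃ (N : ℕ) (α : κ → ℕ → ℝ), ∀ x ∈ Set.Icc a b,
      ‖f x - ∑ k ∈ Finset.range N, ∑ j, α j k • (x ^ k • v k j)‖ < ε := by
  obtain ⟨p, hp⟩ := exists_polynomial_pi_near_of_continuousOn a b f hf ε hε
  have hcoeff : ∀ k, ∃ γ : κ → ℝ, ∑ j, γ j • v k j = fun i => (p i).coeff k := fun k =>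
    (Submodule.mem_span_range_iff_exists_fun ℝ).1 (hv k ▸ Submodule.mem_top)
  choose γ hγ using hcoeff
  let N := Finset.univ.sup (fun i => (p i).natDegree) + 1
  have hN : ∀ i, (p i).natDegree < N := fun i =>
    Nat.lt_succ_of_le (Finset.le_sup (f := fun i => (p i).natDegree) (Finset.mem_univ i))
  refine ⟨N, fun j k => γ k j, fun x hx => ?_⟩
  have hsum : ∑ k ∈ Finset.range N, ∑ j, γ k j • (x ^ k • v k j) = fun i => (p i).eval x := by
    rw [eval_pi_eq_sum_range_smul_coeff p hN]
    refine Finset.sum_congr rfl fun k _ => ?_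
    simp only [smul_comm _ (x ^ k), ← Finset.smul_sum, hγ]
  simpa only [hsum] using hp x hx

theorem stmt1_general (n m : ℕ) (β₁ β₂ : ℝ)
    (A : Matrix (Fin n) (Fin n) ℝ) (B : Matrix (Fin n) (Fin m) ℝ)
    (hA : A.rank = n) (hB : B.rank = n)
    (ξ : ℝ → Fin n → ℝ) (hξ : ContinuousOn ξ (Set.Icc (-β₁) β₂)) (ε : ℝ) (hε : 0 < ε) :
    ∃ (N : ℕ) (α : Fin m → ℕ → ℝ), ∀ β ∈ Set.Icc (-β₁) β₂,
      ‖ξ β - ∑ k ∈ Finset.range N, ∑ j : Fin m,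
        α j k • (β ^ k • (A ^ k).mulVec fun i => B i j)‖ < ε :=
  exists_sum_pow_smul_near_of_span_eq_top _
    (Matrix.span_range_mulVec_col_eq_top (by simpa using hA) (by simpa using hB))
    (-β₁) β₂ ξ hξ ε hε

theorem stmt1 (n m : ℕ) (β₁ β₂ : ℝ) (hβ₁ : 0 < β₁) (hβ₂ : 0 < β₂)
    (A : Matrix (Fin n) (Fin n) ℝ) (B : Matrix (Fin n) (Fin m) ℝ)
    (hA : A.rank = n) (hB : B.rank = n)
    (ξ : ℝ → Fin n → ℝ) (hξ : ContinuousOn ξ (Set.Icc (-β₁) β₂)) (ε : ℝ) (hε : 0 < ε) :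
    ∃ (N : ℕ) (α : Fin m → ℕ → ℝ), ∀ β ∈ Set.Icc (-β₁) β₂,
      ‖ξ β - ∑ k ∈ Finset.range N, ∑ j : Fin m,
        α j k • (β ^ k • (A ^ k).mulVec fun i => B i j)‖ < ε :=
  stmt1_general n m β₁ β₂ A B hA hB ξ hξ ε hε
end

section
/- Let K = [a, b] with 0 < a < b, let A = [[0, 0.1, 0],[0, 0, 1],[4, 0, 0]] and b₁ = e₁ = (1,0,0)ᵀ. Then the span of the functions ε ↦ ε^k A^k b₁, k ≥ 0, is dense in C(K, ℝ³): each coordinate is spanned by monomials ε^{3k}, ε^{3k+1}, ε^{3k+2} respectively (up to positive scalars), and each such monomial family is dense in C(K, ℝ) by the Müntz–Szász theorem. -/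
open Matrix Finset

private lemma sum3' {α : Type*} [AddCommMonoid α] (f : ℕ → α) (M : ℕ) :
    ∑ k ∈ Finset.range (3*M), f k
      = ∑ m ∈ Finset.range M, (f (3*m) + f (3*m+1) + f (3*m+2)) := by
  induction M with
  | zero => simp
  | succ n ih =>
    rw [Finset.sum_range_succ, ← ih, Nat.mul_succ,
        show 3*n+3 = (3*n+2)+1 from rfl, Finset.sum_range_succ,
        show 3*n+2 = (3*n+1)+1 from rfl, Finset.sum_range_succ,
        show 3*n+1 = (3*n)+1 from rfl, Finset.sum_range_succ]
    abel

private lemma mono_approx' (a b : ℝ) (ha : 0 < a) (hab : a < b) (f : ℝ → ℝ)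
    (hf : ContinuousOn f (Set.Icc a b)) (r : ℕ) (ε : ℝ) (hε : 0 < ε) :
    ∃ (M : ℕ) (d : ℕ → ℝ), ∀ x ∈ Set.Icc a b,
      |f x - ∑ m ∈ Finset.range M, d m * x ^ (3*m + r)| < ε := by
  set C : ℝ := (max 1 b) ^ r with hC
  have hC1 : (1:ℝ) ≤ max 1 b := le_max_left _ _
  have hCpos : 0 < C := by positivity
  set φ : ℝ → ℝ := fun y => y ^ (((3:ℕ):ℝ))⁻¹ with hφ
  have hmem : ∀ x ∈ Set.Icc a b, 0 < x := fun x hx => lt_of_lt_of_le ha hx.1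
  have hφx : ∀ x : ℝ, 0 ≤ x → φ (x ^ 3) = x := fun x hx =>
    Real.pow_rpow_inv_natCast hx (by norm_num)
  have hmaps : ∀ y ∈ Set.Icc (a^3) (b^3), φ y ∈ Set.Icc a b := by
    intro y hy
    have hy0 : (0:ℝ) ≤ y := le_trans (by positivity) hy.1
    constructor
    · rw [← hφx a ha.le]
      exact Real.rpow_le_rpow (by positivity) hy.1 (by positivity)
    · rw [← hφx b (ha.trans hab).le]
      exact Real.rpow_le_rpow hy0 hy.2 (by positivity)
  have hφpos : ∀ y ∈ Set.Icc (a^3) (b^3), 0 < φ y :=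
    fun y hy => lt_of_lt_of_le ha (hmaps y hy).1
  set g : ℝ → ℝ := fun y => f (φ y) / (φ y) ^ r with hg
  have hφcont : ContinuousOn φ (Set.Icc (a^3) (b^3)) := by
    intro y hy
    have hy0 : 0 < y := lt_of_lt_of_le (pow_pos ha 3) hy.1
    exact (Real.continuousAt_rpow_const y _ (Or.inl hy0.ne')).continuousWithinAt
  have hgcont : ContinuousOn g (Set.Icc (a^3) (b^3)) := by
    apply ContinuousOn.div
    · exact hf.comp hφcont hmaps
    · exact hφcont.pow r
    · exact fun y hy => pow_ne_zero r (hφpos y hy).ne'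
  obtain ⟨p, hp⟩ := exists_polynomial_near_of_continuousOn (a^3) (b^3) g hgcont
    (ε / C) (by positivity)
  refine ⟨p.natDegree + 1, fun m => p.coeff m, fun x hx => ?_⟩
  have hx0 : 0 < x := hmem x hx
  have hcube : x ^ 3 ∈ Set.Icc (a^3) (b^3) :=
    ⟨pow_le_pow_left₀ ha.le hx.1 3, pow_le_pow_left₀ hx0.le hx.2 3⟩
  have hp' := hp (x ^ 3) hcube
  have hgval : g (x ^ 3) = f x / x ^ r := by
    rw [hg]; simp only [hφx x hx0.le]
  rw [hgval] at hp'
  have hsum : ∑ m ∈ Finset.range (p.natDegree + 1), p.coeff m * x ^ (3*m + r)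
      = x ^ r * p.eval (x ^ 3) := by
    rw [Polynomial.eval_eq_sum_range, Finset.mul_sum]
    refine Finset.sum_congr rfl fun m _ => ?_
    rw [pow_add, pow_mul]; ring
  rw [hsum]
  have hxr : (0:ℝ) < x ^ r := by positivity
  have key : f x - x ^ r * p.eval (x ^ 3) = x ^ r * (f x / x ^ r - p.eval (x ^ 3)) := by
    field_simp
  rw [key, abs_mul, abs_of_pos hxr, abs_sub_comm]
  have hxrC : x ^ r ≤ C := by
    apply pow_le_pow_left₀ hx0.le
    exact le_trans hx.2 (le_max_right 1 b)
  calc x ^ r * |p.eval (x ^ 3) - f x / x ^ r| < x ^ r * (ε / C) :=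
        mul_lt_mul_of_pos_left hp' hxr
    _ ≤ C * (ε / C) := mul_le_mul_of_nonneg_right hxrC (by positivity)
    _ = ε := by field_simp

theorem stmt7 (a b : ℝ) (ha : 0 < a) (hab : a < b) (ξ : ℝ → Fin 3 → ℝ)
    (hξ : ContinuousOn ξ (Set.Icc a b)) (ε : ℝ) (hε : 0 < ε) :
    ∃ (N : ℕ) (c : ℕ → ℝ), ∀ x ∈ Set.Icc a b,
      ‖ξ x - ∑ k ∈ Finset.range N, c k • (x ^ k •
        ((!![0, 0.1, 0; 0, 0, 1; 4, 0, 0] : Matrix (Fin 3) (Fin 3) ℝ) ^ k).mulVec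
          ![1,0,0])‖ < ε := by
  set A : Matrix (Fin 3) (Fin 3) ℝ := !![0, 0.1, 0; 0, 0, 1; 4, 0, 0] with hA
  have hv1 : A.mulVec ![1,0,0] = ![0,0,4] := by
    funext i; fin_cases i <;>
      simp [hA, Matrix.mulVec, dotProduct, Fin.sum_univ_three]
  have hv2 : A.mulVec ![0,0,4] = ![0,4,0] := by
    funext i; fin_cases i <;>
      simp [hA, Matrix.mulVec, dotProduct, Fin.sum_univ_three]
  have hv3 : A.mulVec ![0,4,0] = (0.4:ℝ) • ![1,0,0] := by
    funext i; fin_cases i <;>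
      simp [hA, Matrix.mulVec, dotProduct, Fin.sum_univ_three] <;> norm_num
  have hvec0 : ∀ m, (A ^ (3*m)).mulVec ![1,0,0] = ((0.4:ℝ)^m) • ![1,0,0] := by
    intro m
    induction m with
    | zero => simp
    | succ n ih =>
      rw [show 3*(n+1) = ((3*n)+1)+1+1 from by ring, pow_succ', pow_succ', pow_succ',
        ← Matrix.mulVec_mulVec, ← Matrix.mulVec_mulVec, ← Matrix.mulVec_mulVec,
        ih, Matrix.mulVec_smul, hv1, Matrix.mulVec_smul, hv2, Matrix.mulVec_smul, hv3,
        smul_smul, ← pow_succ]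
  have hvec1 : ∀ m, (A ^ (3*m+1)).mulVec ![1,0,0] = ((0.4:ℝ)^m) • ![0,0,4] := by
    intro m
    rw [pow_succ', ← Matrix.mulVec_mulVec, hvec0, Matrix.mulVec_smul, hv1]
  have hvec2 : ∀ m, (A ^ (3*m+2)).mulVec ![1,0,0] = ((0.4:ℝ)^m) • ![0,4,0] := by
    intro m
    rw [show 3*m+2 = (3*m+1)+1 from rfl, pow_succ', ← Matrix.mulVec_mulVec, hvec1,
      Matrix.mulVec_smul, hv2]
  have hj : ∀ j : Fin 3, ContinuousOn (fun x => ξ x j) (Set.Icc a b) :=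
    fun j => (continuous_apply j).comp_continuousOn hξ
  obtain ⟨M0, d0, h0⟩ := mono_approx' a b ha hab (fun x => ξ x 0) (hj 0) 0 ε hε
  obtain ⟨M1, d1, h1⟩ := mono_approx' a b ha hab (fun x => ξ x 1) (hj 1) 2 ε hε
  obtain ⟨M2, d2, h2⟩ := mono_approx' a b ha hab (fun x => ξ x 2) (hj 2) 1 ε hε
  set M : ℕ := max (max M0 M1) M2 with hM
  have hM0 : M0 ≤ M := le_trans (le_max_left _ _) (le_max_left _ _)
  have hM1 : M1 ≤ M := le_trans (le_max_right _ _) (le_max_left _ _)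
  have hM2 : M2 ≤ M := le_max_right _ _
  set D0 : ℕ → ℝ := fun m => if m < M0 then d0 m else 0 with hD0
  set D1 : ℕ → ℝ := fun m => if m < M1 then d1 m else 0 with hD1
  set D2 : ℕ → ℝ := fun m => if m < M2 then d2 m else 0 with hD2
  have pad : ∀ (d : ℕ → ℝ) (M' : ℕ), M' ≤ M → ∀ (r : ℕ) (x : ℝ),
      ∑ m ∈ Finset.range M, (if m < M' then d m else 0) * x ^ (3*m+r)
        = ∑ m ∈ Finset.range M', d m * x ^ (3*m+r) := by
    intro d M' hM' r x
    rw [← Finset.sum_subset (Finset.range_subset_range.2 hM') (fun m _ hm => by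
      rw [if_neg (by simpa using hm), zero_mul])]
    exact Finset.sum_congr rfl fun m hm => by rw [if_pos (Finset.mem_range.1 hm)]
  set c : ℕ → ℝ := fun k =>
    if k % 3 = 0 then D0 (k/3) / (0.4:ℝ)^(k/3)
    else if k % 3 = 1 then D2 (k/3) / (4 * (0.4:ℝ)^(k/3))
    else D1 (k/3) / (4 * (0.4:ℝ)^(k/3)) with hc
  refine ⟨3*M, c, fun x hx => ?_⟩
  have h04 : ∀ m : ℕ, ((0.4:ℝ))^m ≠ 0 := fun m => by positivity
  have hc0 : ∀ m, c (3*m) = D0 m / (0.4:ℝ)^m := by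
    intro m
    simp [hc, Nat.mul_mod_right, Nat.mul_div_cancel_left m (by norm_num : 0 < 3)]
  have hc1 : ∀ m, c (3*m+1) = D2 m / (4 * (0.4:ℝ)^m) := by
    intro m
    have e1 : (3*m+1) % 3 = 1 := by omega
    have e2 : (3*m+1) / 3 = m := by omega
    simp [hc, e1, e2]
  have hc2 : ∀ m, c (3*m+2) = D1 m / (4 * (0.4:ℝ)^m) := by
    intro m
    have e1 : (3*m+2) % 3 = 2 := by omega
    have e2 : (3*m+2) / 3 = m := by omega
    simp [hc, e1, e2]
  have hterm0 : ∀ m, c (3*m) • (x ^ (3*m) • (A ^ (3*m)).mulVec ![1,0,0])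
      = (D0 m * x ^ (3*m+0)) • (![1,0,0] : Fin 3 → ℝ) := by
    intro m
    rw [hvec0, hc0, smul_smul, smul_smul]
    congr 1
    field_simp
    try ring
  have hterm1 : ∀ m, c (3*m+1) • (x ^ (3*m+1) • (A ^ (3*m+1)).mulVec ![1,0,0])
      = (D2 m * x ^ (3*m+1)) • (![0,0,1] : Fin 3 → ℝ) := by
    intro m
    rw [hvec1, hc1, smul_smul, smul_smul,
      show (![0,0,4] : Fin 3 → ℝ) = (4:ℝ) • ![0,0,1] from by
        funext i; fin_cases i <;> simp, smul_smul]
    congr 1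
    field_simp
    try ring
  have hterm2 : ∀ m, c (3*m+2) • (x ^ (3*m+2) • (A ^ (3*m+2)).mulVec ![1,0,0])
      = (D1 m * x ^ (3*m+2)) • (![0,1,0] : Fin 3 → ℝ) := by
    intro m
    rw [hvec2, hc2, smul_smul, smul_smul,
      show (![0,4,0] : Fin 3 → ℝ) = (4:ℝ) • ![0,1,0] from by
        funext i; fin_cases i <;> simp, smul_smul]
    congr 1
    field_simp
    try ring
  have hsum : ∑ k ∈ Finset.range (3*M), c k • (x ^ k • (A ^ k).mulVec ![1,0,0])
      = ∑ m ∈ Finset.range M,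
        ((D0 m * x ^ (3*m+0)) • (![1,0,0] : Fin 3 → ℝ)
          + (D2 m * x ^ (3*m+1)) • (![0,0,1] : Fin 3 → ℝ)
          + (D1 m * x ^ (3*m+2)) • (![0,1,0] : Fin 3 → ℝ)) := by
    rw [sum3']
    exact Finset.sum_congr rfl fun m _ => by rw [hterm0, hterm1, hterm2]
  rw [hsum, pi_norm_lt_iff hε]
  intro i
  fin_cases i <;>
    simp only [Pi.sub_apply, Finset.sum_apply, Real.norm_eq_abs, Pi.add_apply, Pi.smul_apply,
      smul_eq_mul, Fin.zero_eta, Fin.mk_one, Fin.isValue, Matrix.cons_val_zero,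
      Matrix.cons_val_one, Matrix.cons_val_two, Matrix.head_cons, Matrix.tail_cons,
      show ((⟨2, by omega⟩ : Fin 3)) = (2 : Fin 3) from rfl,
      mul_one, mul_zero, add_zero, zero_add]
  · have pad0 := pad d0 M0 hM0 0 x
    have h00 := h0 x hx
    simp only [Nat.add_zero] at pad0 h00
    simp only [hD0]
    rw [pad0]
    exact h00
  · simp only [hD1]
    rw [pad d1 M1 hM1 2 x]
    exact h1 x hx
  · simp only [hD2]
    rw [pad d2 M2 hM2 1 x]
    exact h2 x hx
end

section
/- Let J = diag(λ₁, 2λ₁, aλ₁) scaled as J_a = diag(1, 2, a) with a chosen so that [a, 3a] ∩ [1,3] ≠ ∅, [a,3a] ∩ [2,6] ≠ ∅ and [1,3] ∩ [2,6] ∩ [a,3a] ≠ ∅ (e.g. a = 1.5). Let B̃ have rows (1,0), (0,1), (1,2). Then every η in the span of {β ↦ β^k J_a^k b̃_j : j = 1,2, k ≥ 0} satisfies the linear relation η₃(β) = η₁((3/2)β) + 2·η₂((3/4)β) for all β with (3/2)β ∈ [2,3]; hence the span is not dense in C([1,3], ℝ³). -/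
/-- The reachable-set element of the motivating example with `J_a = diag(1, 2, 1.5)`
and `B̃` with rows `(1,0), (0,1), (1,2)`. -/
noncomputable def stmt8η (N : ℕ) (c d : ℕ → ℝ) (γ : ℝ) : Fin 3 → ℝ :=
  ∑ k ∈ Finset.range N,
    (c k • (γ ^ k • ((!![1,0,0;0,2,0;0,0,1.5] : Matrix (Fin 3) (Fin 3) ℝ) ^ k).mulVec ![1,0,1]) +
     d k • (γ ^ k • ((!![1,0,0;0,2,0;0,0,1.5] : Matrix (Fin 3) (Fin 3) ℝ) ^ k).mulVec ![0,1,2]))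

lemma stmt8pow1 (k : ℕ) :
    ((!![1,0,0;0,2,0;0,0,1.5] : Matrix (Fin 3) (Fin 3) ℝ) ^ k).mulVec ![1,0,1]
      = ![1, 0, 1.5 ^ k] := by
  induction k with
  | zero => simp [Matrix.one_mulVec]
  | succ n ih =>
      rw [pow_succ', ← Matrix.mulVec_mulVec, ih]
      funext i
      fin_cases i <;>
        simp [Matrix.mulVec, dotProduct, Fin.sum_univ_three, pow_succ] <;> ring

lemma stmt8pow2 (k : ℕ) :
    ((!![1,0,0;0,2,0;0,0,1.5] : Matrix (Fin 3) (Fin 3) ℝ) ^ k).mulVec ![0,1,2]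
      = ![0, 2 ^ k, 2 * 1.5 ^ k] := by
  induction k with
  | zero => simp [Matrix.one_mulVec]
  | succ n ih =>
      rw [pow_succ', ← Matrix.mulVec_mulVec, ih]
      funext i
      fin_cases i <;>
        simp [Matrix.mulVec, dotProduct, Fin.sum_univ_three, pow_succ] <;> ring

lemma stmt8η0 (N : ℕ) (c d : ℕ → ℝ) (γ : ℝ) :
    stmt8η N c d γ 0 = ∑ k ∈ Finset.range N, c k * γ ^ k := by
  simp only [stmt8η, Finset.sum_apply, Pi.add_apply, Pi.smul_apply, stmt8pow1, stmt8pow2,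
    smul_eq_mul]
  refine Finset.sum_congr rfl fun k _ => ?_
  simp

lemma stmt8η1 (N : ℕ) (c d : ℕ → ℝ) (γ : ℝ) :
    stmt8η N c d γ 1 = ∑ k ∈ Finset.range N, d k * γ ^ k * 2 ^ k := by
  simp only [stmt8η, Finset.sum_apply, Pi.add_apply, Pi.smul_apply, stmt8pow1, stmt8pow2,
    smul_eq_mul]
  refine Finset.sum_congr rfl fun k _ => ?_
  simp; ring

lemma stmt8η2 (N : ℕ) (c d : ℕ → ℝ) (γ : ℝ) :
    stmt8η N c d γ 2 = ∑ k ∈ Finset.range N, (c k + 2 * d k) * γ ^ k * 1.5 ^ k := by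
  simp only [stmt8η, Finset.sum_apply, Pi.add_apply, Pi.smul_apply, stmt8pow1, stmt8pow2,
    smul_eq_mul]
  refine Finset.sum_congr rfl fun k _ => ?_
  simp; ring

lemma stmt8rel (N : ℕ) (c d : ℕ → ℝ) (β : ℝ) :
    stmt8η N c d β 2 = stmt8η N c d ((3/2) * β) 0 + 2 * stmt8η N c d ((3/4) * β) 1 := by
  rw [stmt8η0, stmt8η1, stmt8η2, Finset.mul_sum, ← Finset.sum_add_distrib]
  refine Finset.sum_congr rfl fun k _ => ?_
  rw [mul_pow, mul_pow]
  have h32 : ((3:ℝ)/2) ^ k = 1.5 ^ k := by norm_num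
  have h34 : ((3:ℝ)/4) ^ k * 2 ^ k = 1.5 ^ k := by
    rw [← mul_pow]; norm_num
  calc (c k + 2 * d k) * β ^ k * 1.5 ^ k
      = c k * (1.5 ^ k * β ^ k) + 2 * (d k * (((3:ℝ)/4) ^ k * 2 ^ k * β ^ k)) := by
        rw [h34]; ring
    _ = c k * ((3/2) ^ k * β ^ k) + 2 * (d k * ((3/4) ^ k * β ^ k) * 2 ^ k) := by
        rw [h32]; ring

theorem stmt8 :
    (∀ (N : ℕ) (c d : ℕ → ℝ) (β : ℝ), (3/2) * β ∈ Set.Icc (2:ℝ) 3 →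
      stmt8η N c d β 2 = stmt8η N c d ((3/2) * β) 0 + 2 * stmt8η N c d ((3/4) * β) 1) ∧
    ¬ (∀ ξ : ℝ → Fin 3 → ℝ, ContinuousOn ξ (Set.Icc 1 3) → ∀ ε > 0,
        ∃ (N : ℕ) (c d : ℕ → ℝ), ∀ β ∈ Set.Icc (1:ℝ) 3,
          ‖ξ β - stmt8η N c d β‖ < ε) := by
  constructor
  · intro N c d β _
    exact stmt8rel N c d β
  · intro h
    obtain ⟨N, c, d, hN⟩ := h (fun _ => ![0, 0, 1]) continuousOn_const (1/4) (by norm_num)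
    have h1 := hN (4/3) (by norm_num)
    have h2 := hN 2 (by norm_num)
    have h3 := hN 1 (by norm_num)
    have key := stmt8rel N c d (4/3)
    have e2 : (3:ℝ)/2 * (4/3) = 2 := by norm_num
    have e3 : (3:ℝ)/4 * (4/3) = 1 := by norm_num
    rw [e2, e3] at key
    have b1 := (norm_le_pi_norm ((![0,0,1] : Fin 3 → ℝ) - stmt8η N c d (4/3)) 2).trans_lt h1
    have b2 := (norm_le_pi_norm ((![0,0,1] : Fin 3 → ℝ) - stmt8η N c d 2) 0).trans_lt h2
    have b3 := (norm_le_pi_norm ((![0,0,1] : Fin 3 → ℝ) - stmt8η N c d 1) 1).trans_lt h3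
    simp only [Pi.sub_apply, Real.norm_eq_abs, Matrix.cons_val_zero, Matrix.cons_val_one,
      Matrix.head_cons, Matrix.cons_val_two, Matrix.tail_cons] at b1 b2 b3
    rw [abs_lt] at b1 b2 b3
    linarith [key, b1.1, b1.2, b2.1, b2.2, b3.1, b3.2]
end

section
/- Let J₀ ∈ ℝ^{2×2} be the Jordan block [[λ, 1],[0, λ]] with λ ≠ 0, and b = (1, α)ᵀ with α ≠ 0. Then for every choice of real coefficients c₀,…,c_N, the functions η₁(β) = Σ_k c_k(βλ)^k + α Σ_k c_k k β^k λ^{k-1} and η₂(β) = α Σ_k c_k (βλ)^k (the components of Σ_k c_k β^k J₀^k b) satisfy the rigid relation η₁ = η₂/α + (d/dλ)η₂; in particular, the span of {β ↦ β^k J₀^k b : k ≥ 0} is not dense in C([β₁, β₂], ℝ²) for 0 < β₁ < β₂. -/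
/-!
With `q = ∑ c_k X^k`, the span element is `q(β J₀) b`, and for a 2×2 Jordan block
`q([[a, t], [0, a]]) = [[q a, t q' a], [0, q a]]`. Hence `η₂ β = α q(βλ)` and
`η₁ β = q(βλ) + α β q'(βλ) = (1/α - 1/λ) η₂ β + (β η₂ β)' / λ`. Integrating over `[β₁, β₂]`,
the functional `ξ ↦ ∫ ξ₁ - (1/α - 1/λ) ∫ ξ₂ - [β ξ₂ β]_{β₁}^{β₂} / λ` vanishes on the span,
is bounded for the sup norm, and takes the value `β₂ - β₁` at the constant target `(1, 0)`,
which therefore cannot be approximated.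
-/

/-- The reachable-set element for the Jordan block `J₀ = [[λ,1],[0,λ]]` with input
column `b = (1, α)ᵀ`. -/
noncomputable def stmt9η (l α : ℝ) (N : ℕ) (c : ℕ → ℝ) (β : ℝ) : Fin 2 → ℝ :=
  ∑ k ∈ Finset.range N,
    c k • (β ^ k • ((!![l, 1; 0, l] : Matrix (Fin 2) (Fin 2) ℝ) ^ k).mulVec ![1, α])

open Polynomial

theorem Polynomial.aeval_jordan_fin_two {R : Type*} [CommRing R] (a t : R) (p : R[X]) :
    aeval (!![a, t; 0, a] : Matrix (Fin 2) (Fin 2) R) p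
      = !![p.eval a, t * p.derivative.eval a; 0, p.eval a] := by
  induction p using Polynomial.induction_on with
  | C r =>
    rw [aeval_C, Algebra.algebraMap_eq_smul_one]
    ext i j; fin_cases i <;> fin_cases j <;> simp
  | add p q hp hq =>
    rw [map_add, hp, hq]
    ext i j; fin_cases i <;> fin_cases j <;> simp [mul_add]
  | monomial n r ih =>
    rw [pow_succ, ← mul_assoc, map_mul, ih, aeval_X]
    ext i j
    fin_cases i <;> fin_cases j <;> simp [Matrix.mul_apply, Fin.sum_univ_two, derivative_mul]
    ring

noncomputable def truncPoly {R : Type*} [Semiring R] (N : ℕ) (c : ℕ → R) : R[X] :=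
  ∑ k ∈ Finset.range N, monomial k (c k)

theorem eval_truncPoly {R : Type*} [Semiring R] (N : ℕ) (c : ℕ → R) (x : R) :
    (truncPoly N c).eval x = ∑ k ∈ Finset.range N, c k * x ^ k := by
  simp [truncPoly, eval_finsetSum]

theorem stmt9η_eq_aeval (l α : ℝ) (N : ℕ) (c : ℕ → ℝ) (β : ℝ) :
    stmt9η l α N c β = (aeval !![β * l, β; 0, β * l] (truncPoly N c)).mulVec ![1, α] := by
  have hβJ : !![β * l, β; 0, β * l] = β • !![l, 1; 0, l] := by
    ext i j; fin_cases i <;> fin_cases j <;> simp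
  simp only [stmt9η, truncPoly, map_sum, aeval_monomial, hβJ, _root_.smul_pow, Matrix.sum_mulVec,
    ← Algebra.smul_def, Matrix.smul_mulVec, smul_smul]

theorem stmt9η_apply_zero (l α : ℝ) (N : ℕ) (c : ℕ → ℝ) (β : ℝ) :
    stmt9η l α N c β 0 = (truncPoly N c).eval (β * l)
      + α * β * (truncPoly N c).derivative.eval (β * l) := by
  simp [stmt9η_eq_aeval, aeval_jordan_fin_two, Matrix.mulVec, dotProduct, Fin.sum_univ_two,
    mul_comm]
  ring

theorem stmt9η_apply_one (l α : ℝ) (N : ℕ) (c : ℕ → ℝ) (β : ℝ) :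
    stmt9η l α N c β 1 = α * (truncPoly N c).eval (β * l) := by
  simp [stmt9η_eq_aeval, aeval_jordan_fin_two, Matrix.mulVec, dotProduct, Fin.sum_univ_two,
    mul_comm]

theorem Polynomial.hasDerivAt_eval_mul_const {𝕜 : Type*} [NontriviallyNormedField 𝕜] (p : 𝕜[X])
    (a x : 𝕜) : HasDerivAt (fun x => p.eval (x * a)) (p.derivative.eval (x * a) * a) x := by
  simpa only [Function.comp_def] using (p.hasDerivAt (x * a)).comp x (hasDerivAt_mul_const a)

theorem continuous_stmt9η (l α : ℝ) (N : ℕ) (c : ℕ → ℝ) : Continuous (stmt9η l α N c) := by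
  unfold stmt9η; fun_prop

section
open intervalIntegral MeasureTheory

noncomputable def jordanFunctional (A B a b : ℝ) (ξ : ℝ → Fin 2 → ℝ) : ℝ :=
  (∫ x in a..b, ξ x 0) - A * (∫ x in a..b, ξ x 1) - B * (b * ξ b 1 - a * ξ a 1)

variable {A B a b : ℝ}

theorem jordanFunctional_eq_zero {ξ : ℝ → Fin 2 → ℝ} {w : ℝ → ℝ}
    (hw : ∀ x ∈ Set.uIcc a b, HasDerivAt (fun x => x * ξ x 1) (w x) x)
    (hξ : IntervalIntegrable (fun x => ξ x 1) volume a b)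
    (hwi : IntervalIntegrable w volume a b)
    (hrel : ∀ x, ξ x 0 = A * ξ x 1 + B * w x) :
    jordanFunctional A B a b ξ = 0 := by
  have hint : ∫ x in a..b, w x = b * ξ b 1 - a * ξ a 1 := integral_eq_sub_of_hasDerivAt hw hwi
  simp only [jordanFunctional, hrel, integral_add (hξ.const_mul A) (hwi.const_mul B),
    intervalIntegral.integral_const_mul, hint]
  ring

theorem jordanFunctional_sub {ξ ζ : ℝ → Fin 2 → ℝ}
    (hξ : ∀ i, IntervalIntegrable (fun x => ξ x i) volume a b)
    (hζ : ∀ i, IntervalIntegrable (fun x => ζ x i) volume a b) :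
    jordanFunctional A B a b (ξ - ζ) = jordanFunctional A B a b ξ - jordanFunctional A B a b ζ := by
  simp only [jordanFunctional, Pi.sub_apply, integral_sub (hξ _) (hζ _)]
  ring

theorem abs_jordanFunctional_le {ξ : ℝ → Fin 2 → ℝ} {ε : ℝ} (hab : a ≤ b)
    (hξ : ∀ x ∈ Set.Icc a b, ‖ξ x‖ ≤ ε) :
    |jordanFunctional A B a b ξ| ≤ ε * ((b - a) * (1 + |A|) + |B| * (|a| + |b|)) := by
  have hcomp : ∀ i, ∀ x ∈ Set.Icc a b, |ξ x i| ≤ ε := fun i x hx =>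
    (norm_le_pi_norm (ξ x) i).trans (hξ x hx)
  have hint : ∀ i, |∫ x in a..b, ξ x i| ≤ ε * (b - a) := fun i => by
    have := norm_integral_le_of_norm_le_const (f := fun x => ξ x i) fun x hx =>
      hcomp i x (Set.Ioc_subset_Icc_self (Set.uIoc_of_le hab ▸ hx))
    rwa [Real.norm_eq_abs, abs_of_nonneg (sub_nonneg.2 hab)] at this
  have hend : |b * ξ b 1 - a * ξ a 1| ≤ ε * (|a| + |b|) := by
    have hb := hcomp 1 b ⟨hab, le_rfl⟩
    have ha := hcomp 1 a ⟨le_rfl, hab⟩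
    calc |b * ξ b 1 - a * ξ a 1| ≤ |b| * |ξ b 1| + |a| * |ξ a 1| := by
          simpa only [abs_mul] using abs_sub (b * ξ b 1) (a * ξ a 1)
      _ ≤ |b| * ε + |a| * ε := by gcongr
      _ = ε * (|a| + |b|) := by ring
  calc |jordanFunctional A B a b ξ|
      ≤ |∫ x in a..b, ξ x 0| + |A| * |∫ x in a..b, ξ x 1| + |B| * |b * ξ b 1 - a * ξ a 1| := by
        simp only [jordanFunctional, ← abs_mul]
        exact (abs_sub _ _).trans (add_le_add (abs_sub _ _) le_rfl)
    _ ≤ ε * (b - a) + |A| * (ε * (b - a)) + |B| * (ε * (|a| + |b|)) := by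
        gcongr
        exacts [hint 0, hint 1]
    _ = ε * ((b - a) * (1 + |A|) + |B| * (|a| + |b|)) := by ring

theorem sub_le_of_jordanFunctional_eq_zero {η : ℝ → Fin 2 → ℝ} {ε : ℝ} (hab : a ≤ b)
    (hη : Continuous η) (hη₀ : jordanFunctional A B a b η = 0)
    (hε : ∀ x ∈ Set.Icc a b, ‖![1, 0] - η x‖ ≤ ε) :
    b - a ≤ ε * ((b - a) * (1 + |A|) + |B| * (|a| + |b|)) := by
  have hcomp : ∀ ζ : ℝ → Fin 2 → ℝ, Continuous ζ → ∀ i,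
      IntervalIntegrable (fun x => ζ x i) volume a b :=
    fun ζ hζ i => ((continuous_apply i).comp hζ).intervalIntegrable _ _
  calc b - a = jordanFunctional A B a b (fun _ => ![1, 0]) - jordanFunctional A B a b η := by
        rw [hη₀, sub_zero]
        simp [jordanFunctional]
    _ = jordanFunctional A B a b ((fun _ => ![1, 0]) - η) :=
        (jordanFunctional_sub (hcomp _ continuous_const) (hcomp _ hη)).symm
    _ ≤ _ := (le_abs_self _).trans (abs_jordanFunctional_le hab hε)
end

theorem jordanFunctional_stmt9η_eq_zero {l α : ℝ} (hl : l ≠ 0) (hα : α ≠ 0) (a b : ℝ) (N : ℕ)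
    (c : ℕ → ℝ) : jordanFunctional (1 / α - 1 / l) (1 / l) a b (stmt9η l α N c) = 0 := by
  refine jordanFunctional_eq_zero (w := fun x => α * (truncPoly N c).eval (x * l)
      + x * (α * ((truncPoly N c).derivative.eval (x * l) * l))) (fun x _ => ?_)
    (((continuous_apply 1).comp (continuous_stmt9η l α N c)).intervalIntegrable _ _)
    ((by fun_prop : Continuous _).intervalIntegrable _ _) fun x => ?_
  · simp only [stmt9η_apply_one]
    simpa only [one_mul] using
      (hasDerivAt_id' x).fun_mul (((truncPoly N c).hasDerivAt_eval_mul_const l x).const_mul α)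
  · rw [stmt9η_apply_zero, stmt9η_apply_one]
    field_simp
    ring

theorem stmt9_general (l α β₁ β₂ : ℝ) (hl : l ≠ 0) (hα : α ≠ 0) (h2 : β₁ < β₂) :
    (∀ (N : ℕ) (c : ℕ → ℝ) (β : ℝ),
      stmt9η l α N c β 0 = stmt9η l α N c β 1 / α +
        deriv (fun x : ℝ => α * ∑ k ∈ Finset.range N, c k * β ^ k * x ^ k) l) ∧
    ¬ (∀ ξ : ℝ → Fin 2 → ℝ, ContinuousOn ξ (Set.Icc β₁ β₂) → ∀ ε > 0,
        ∃ (N : ℕ) (c : ℕ → ℝ), ∀ β ∈ Set.Icc β₁ β₂,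
          ‖ξ β - stmt9η l α N c β‖ < ε) := by
  refine ⟨fun N c β => ?_, fun hdense => ?_⟩
  · have hpoly : (fun x : ℝ => α * ∑ k ∈ Finset.range N, c k * β ^ k * x ^ k)
        = fun x => α * (truncPoly N c).eval (x * β) := by
      funext x
      simp only [eval_truncPoly, mul_pow, mul_assoc, mul_comm (x ^ _)]
    rw [hpoly, (((truncPoly N c).hasDerivAt_eval_mul_const β l).const_mul α).deriv,
      stmt9η_apply_zero, stmt9η_apply_one, mul_comm l β]
    field_simp
  · set C := (β₂ - β₁) * (1 + |1 / α - 1 / l|) + |1 / l| * (|β₁| + |β₂|)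
    have hC : 0 ≤ C := by positivity
    obtain ⟨N, c, hc⟩ := hdense (fun _ => ![1, 0]) continuousOn_const ((β₂ - β₁) / (C + 1))
      (div_pos (sub_pos.2 h2) (by positivity))
    have hle : β₂ - β₁ ≤ (β₂ - β₁) / (C + 1) * C :=
      sub_le_of_jordanFunctional_eq_zero h2.le (continuous_stmt9η l α N c)
        (jordanFunctional_stmt9η_eq_zero hl hα _ _ N c) fun β hβ => (hc β hβ).le
    have hlt : (β₂ - β₁) / (C + 1) * C < β₂ - β₁ := by
      rw [div_mul_eq_mul_div, div_lt_iff₀ (by positivity)]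
      nlinarith [sub_pos.2 h2]
    linarith

theorem stmt9 (l α β₁ β₂ : ℝ) (hl : l ≠ 0) (hα : α ≠ 0) (h1 : 0 < β₁) (h2 : β₁ < β₂) :
    (∀ (N : ℕ) (c : ℕ → ℝ) (β : ℝ),
      stmt9η l α N c β 0 = stmt9η l α N c β 1 / α +
        deriv (fun x : ℝ => α * ∑ k ∈ Finset.range N, c k * β ^ k * x ^ k) l) ∧
    ¬ (∀ ξ : ℝ → Fin 2 → ℝ, ContinuousOn ξ (Set.Icc β₁ β₂) → ∀ ε > 0,
        ∃ (N : ℕ) (c : ℕ → ℝ), ∀ β ∈ Set.Icc β₁ β₂,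
          ‖ξ β - stmt9η l α N c β‖ < ε) :=
  stmt9_general l α β₁ β₂ hl hα h2
end

section
/- Let K be a compact interval and let f : K → ℂ be continuous with f(β) = f₁(β) + i f₂(β). If λ = i r with r > 0 (purely imaginary), then for any ε > 0 there exist real coefficients c_k such that sup_{β∈K} |f(β) − Σ_{k=0}^N c_k (λβ)^k| < ε; i.e., the real span of {β ↦ (λβ)^k : k ≥ 0} is dense in C(K, ℂ). -/
/-! With `s = rβ`, even powers of `i s` are real and odd ones purely imaginary, so the real
combinations of the `(i s)^k` are exactly `P(s²) + i s Q(s²)` for real polynomials `P`, `Q`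
(take the coefficients of `P(-X²) + X Q(-X²)`). Since `s` ranges over an interval `[A, B]` with
`0 < A`, Weierstrass' theorem for `g ∘ √` and `(g ∘ √) / √` on `[A², B²]` shows that both shapes
approximate any continuous real `g`; apply this to the real and imaginary parts of `f`. -/

open Polynomial Set

section
variable {A B : ℝ} {g : ℝ → ℝ}

theorem exists_polynomial_comp_sq_near (hA : 0 ≤ A) (hAB : A ≤ B)
    (hg : ContinuousOn g (Icc A B)) {ε : ℝ} (hε : 0 < ε) :
    ∃ p : ℝ[X], ∀ s ∈ Icc A B, |p.eval (s ^ 2) - g s| < ε := by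
  have hsqrt : MapsTo Real.sqrt (Icc (A ^ 2) (B ^ 2)) (Icc A B) := fun x hx =>
    ⟨by simpa [Real.sqrt_sq hA] using Real.sqrt_le_sqrt hx.1,
      by simpa [Real.sqrt_sq (hA.trans hAB)] using Real.sqrt_le_sqrt hx.2⟩
  obtain ⟨p, hp⟩ := exists_polynomial_near_of_continuousOn _ _ (g ∘ Real.sqrt)
    (hg.comp Real.continuous_sqrt.continuousOn hsqrt) ε hε
  refine ⟨p, fun s hs => ?_⟩
  have hs0 : 0 ≤ s := hA.trans hs.1
  simpa [Real.sqrt_sq hs0] using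
    hp (s ^ 2) ⟨pow_le_pow_left₀ hA hs.1 2, pow_le_pow_left₀ hs0 hs.2 2⟩

theorem exists_mul_polynomial_comp_sq_near (hA : 0 < A) (hAB : A ≤ B)
    (hg : ContinuousOn g (Icc A B)) {ε : ℝ} (hε : 0 < ε) :
    ∃ q : ℝ[X], ∀ s ∈ Icc A B, |s * q.eval (s ^ 2) - g s| < ε := by
  have hB : 0 < B := hA.trans_le hAB
  have hdiv : ContinuousOn (fun s => g s / s) (Icc A B) :=
    hg.div continuousOn_id fun s hs => (hA.trans_le hs.1).ne'
  obtain ⟨q, hq⟩ := exists_polynomial_comp_sq_near hA.le hAB hdiv (div_pos hε hB)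
  refine ⟨q, fun s hs => ?_⟩
  have hs0 : 0 < s := hA.trans_le hs.1
  calc |s * q.eval (s ^ 2) - g s| = |s * (q.eval (s ^ 2) - g s / s)| := by
        rw [mul_sub, mul_div_cancel₀ _ hs0.ne']
    _ = s * |q.eval (s ^ 2) - g s / s| := by rw [abs_mul, abs_of_pos hs0]
    _ ≤ B * |q.eval (s ^ 2) - g s / s| := by gcongr; exact hs.2
    _ < B * (ε / B) := by gcongr; exact hq s hs
    _ = ε := mul_div_cancel₀ _ hB.ne'

end

theorem aeval_I_mul_comp_neg_sq_add_X_mul (p q : ℝ[X]) (s : ℝ) :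
    aeval (Complex.I * s) (p.comp (-X ^ 2) + X * q.comp (-X ^ 2)) =
      p.eval (s ^ 2) + Complex.I * (s * q.eval (s ^ 2)) := by
  have h : aeval (Complex.I * s) (-X ^ 2 : ℝ[X]) = algebraMap ℝ ℂ (s ^ 2) := by
    simp [mul_pow]
  rw [map_add, map_mul, aeval_comp, aeval_comp, h, aeval_X,
    aeval_algebraMap_apply_eq_algebraMap_eval, aeval_algebraMap_apply_eq_algebraMap_eval,
    Complex.coe_algebraMap, mul_assoc]

theorem exists_sum_real_mul_I_mul_pow_near {A B : ℝ} {g : ℝ → ℂ} (hA : 0 < A) (hAB : A ≤ B)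
    (hg : ContinuousOn g (Icc A B)) {ε : ℝ} (hε : 0 < ε) :
    ∃ (N : ℕ) (c : ℕ → ℝ), ∀ s ∈ Icc A B,
      ‖g s - ∑ k ∈ Finset.range N, (c k : ℂ) * (Complex.I * s) ^ k‖ < ε := by
  obtain ⟨p, hp⟩ := exists_polynomial_comp_sq_near hA.le hAB
    (Complex.continuous_re.comp_continuousOn hg) (half_pos hε)
  obtain ⟨q, hq⟩ := exists_mul_polynomial_comp_sq_near hA hAB
    (Complex.continuous_im.comp_continuousOn hg) (half_pos hε)
  set T := p.comp (-X ^ 2) + X * q.comp (-X ^ 2) with hT_def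
  refine ⟨T.natDegree + 1, T.coeff, fun s hs => ?_⟩
  have hT : ∑ k ∈ Finset.range (T.natDegree + 1), (T.coeff k : ℂ) * (Complex.I * s) ^ k =
      p.eval (s ^ 2) + Complex.I * (s * q.eval (s ^ 2)) := by
    rw [← aeval_I_mul_comp_neg_sq_add_X_mul, ← hT_def, aeval_eq_sum_range]
    simp only [Complex.real_smul]
  rw [hT]
  calc _ ≤ |(g s).re - p.eval (s ^ 2)| + |(g s).im - s * q.eval (s ^ 2)| :=
        (Complex.norm_le_abs_re_add_abs_im _).trans_eq (by simp)
    _ < ε / 2 + ε / 2 := by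
        rw [abs_sub_comm, abs_sub_comm (g s).im]
        exact add_lt_add (hp s hs) (hq s hs)
    _ = ε := add_halves ε

theorem stmt13 (a b r : ℝ) (ha : 0 < a) (hab : a ≤ b) (hr : 0 < r) (f : ℝ → ℂ)
    (hf : ContinuousOn f (Set.Icc a b)) (ε : ℝ) (hε : 0 < ε) :
    ∃ (N : ℕ) (c : ℕ → ℝ), ∀ β ∈ Set.Icc a b,
      ‖f β - ∑ k ∈ Finset.range N,
        (c k : ℂ) * ((Complex.I * r) * β) ^ k‖ < ε := by
  have hscale : MapsTo (· / r) (Icc (r * a) (r * b)) (Icc a b) := fun s hs =>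
    ⟨(le_div_iff₀' hr).2 hs.1, (div_le_iff₀' hr).2 hs.2⟩
  obtain ⟨N, c, hc⟩ := exists_sum_real_mul_I_mul_pow_near (mul_pos hr ha) (by gcongr)
    (hf.comp (continuousOn_id.div_const r) hscale) hε
  refine ⟨N, c, fun β hβ => ?_⟩
  simpa [mul_div_cancel_left₀ β hr.ne', mul_assoc] using
    hc (r * β) ⟨by gcongr; exact hβ.1, by gcongr; exact hβ.2⟩
end
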